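/- Let 0 < η < 1, let λ ≤ R / √d, and let (θ_t) be the iterates of the clipped Newton method: θ_{t+1} = θ_t − η · V_t · clip(Σ_t⁻¹ V_tᵀ ∇L(θ_t), λ), where V_t, Σ_t give an orthogonal eigendecomposition of ∇²L(θ_t). If at some step T one has L(θ_T) − min L ≤ μ λ² / 8, then for all t ≥ T: (1) no clipping occurs, i.e. θ_{t+1} = θ_t − η (∇²L(θ_t))⁻¹ ∇L(θ_t); and (2) L(θ_t) − min L ≤ (1 − η(1 − η))^{t − T} · (L(θ_T) − min L) (Lemma 11, Convergence Lemma). -/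

import Mathlib

/-!
Under Assumption 2, along any segment of length at most `R` the second-order Taylor remainder of
`L` lies between `1/4` and `1` times the Hessian quadratic form at the starting point. By convexity,
a loss gap below `μR²/4` keeps `θ` within distance `R` of `θ*`. There the Newton direction `n` and
the Newton decrement `ν = ⟪∇L θ, n⟫` satisfy `L θ - min L ≤ ν`, `μ/2 ‖n‖² ≤ ν` and
`L (θ - t n) ≤ L θ - t (1 - t) ν`. With `t = λ / (2‖n‖)` the last bound forces `‖n‖ ≤ λ`, so no
coordinate of `Vᵀ n` (a vector of norm `‖n‖`) is clipped; with `t = η` it gives the contraction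
factor `1 - η (1 - η)`, which keeps the gap below `μλ²/8` for every later step.
-/

open Matrix Filter
open scoped RealInnerProductSpace

noncomputable def hessQF {d : ℕ} (A : Matrix (Fin d) (Fin d) ℝ)
    (v : EuclideanSpace ℝ (Fin d)) : ℝ :=
  ⟪v, Matrix.toEuclideanLin A v⟫

def clipR (lam x : ℝ) : ℝ := max (min x lam) (-lam)

open Set

theorem le_add_deriv_add_of_deriv2_le {f f' f'' : ℝ → ℝ} (hf : ∀ s, HasDerivAt f (f' s) s)
    (hf' : ∀ s, HasDerivAt f' (f'' s) s) {c : ℝ} (hc : ∀ s ∈ Icc (0 : ℝ) 1, f'' s ≤ c) :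
    f 1 ≤ f 0 + f' 0 + c / 2 := by
  have hslope : ∀ s ∈ Icc (0 : ℝ) 1, f' s - f' 0 ≤ c * s := by
    intro s hs
    have := (convex_Icc (0 : ℝ) 1).image_sub_le_mul_sub_of_deriv_le
      (fun x _ => (hf' x).continuousAt.continuousWithinAt)
      (fun x _ => (hf' x).differentiableAt.differentiableWithinAt)
      (fun x hx => (hf' x).deriv ▸ hc x (interior_subset hx))
      0 (left_mem_Icc.2 zero_le_one) s hs hs.1
    simpa using this
  have hg : ∀ s, HasDerivAt (fun s => f s - s * f' 0 - c * s ^ 2 / 2)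
      (f' s - f' 0 - c * s) s := by
    intro s
    have h := ((hf s).fun_sub ((hasDerivAt_id' s).mul_const (f' 0))).fun_sub
      (((hasDerivAt_pow 2 s).const_mul c).div_const 2)
    exact h.congr_deriv (by norm_num; ring)
  have := (convex_Icc (0 : ℝ) 1).image_sub_le_mul_sub_of_deriv_le (C := 0)
    (fun x _ => (hg x).continuousAt.continuousWithinAt)
    (fun x _ => (hg x).differentiableAt.differentiableWithinAt)
    (fun x hx => by rw [(hg x).deriv]; linarith [hslope x (interior_subset hx)])
    0 (left_mem_Icc.2 zero_le_one) 1 (right_mem_Icc.2 zero_le_one) zero_le_one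
  linarith

section

variable {E : Type*} [NormedAddCommGroup E] [InnerProductSpace ℝ E]

-- Assumption 2 of the paper, for a field `A` of Hessians.
def HessianStable (A : E → E →L[ℝ] E) (R : ℝ) : Prop :=
  ∀ θ θ' : E, ‖θ - θ'‖ ≤ R → ∀ v,
    (1 / 2) * ⟪v, A θ' v⟫ ≤ ⟪v, A θ v⟫ ∧ ⟪v, A θ v⟫ ≤ 2 * ⟪v, A θ' v⟫

variable {A : E → E →L[ℝ] E} {R : ℝ}

theorem HessianStable.inner_apply_self_nonneg (hstab : HessianStable A R) (hR : 0 ≤ R)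
    (θ v : E) : 0 ≤ ⟪v, A θ v⟫ := by
  linarith [(hstab θ θ (by simpa using hR) v).2]

theorem norm_add_smul_sub_le {θ δ : E} (hδ : ‖δ‖ ≤ R) {s : ℝ} (hs : s ∈ Icc (0 : ℝ) 1) :
    ‖θ + s • δ - θ‖ ≤ R := by
  rw [add_sub_cancel_left, norm_smul, Real.norm_of_nonneg hs.1]
  nlinarith [norm_nonneg δ, hs.2]

theorem hasDerivAt_const_add_smul (θ δ : E) (s : ℝ) :
    HasDerivAt (fun s : ℝ => θ + s • δ) δ s := by
  simpa using ((hasDerivAt_id s).smul_const δ).const_add θ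

variable [CompleteSpace E] {L : E → ℝ}

theorem hasDerivAt_comp_add_smul (hL : Differentiable ℝ L) (θ δ : E) (s : ℝ) :
    HasDerivAt (fun s : ℝ => L (θ + s • δ)) ⟪gradient L (θ + s • δ), δ⟫ s := by
  simpa [Function.comp_def] using
    (hL _).hasGradientAt.hasFDerivAt.comp_hasDerivAt s (hasDerivAt_const_add_smul θ δ s)

theorem hasDerivAt_inner_gradient_comp_add_smul
    (hA : ∀ x, HasFDerivAt (gradient L) (A x) x) (θ δ : E) (s : ℝ) :
    HasDerivAt (fun s : ℝ => ⟪gradient L (θ + s • δ), δ⟫) ⟪δ, A (θ + s • δ) δ⟫ s := by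
  have := ((hA _).comp_hasDerivAt s (hasDerivAt_const_add_smul θ δ s)).inner ℝ
    (hasDerivAt_const s δ)
  simpa [Function.comp_def, real_inner_comm] using this

namespace HessianStable

theorem add_le (hstab : HessianStable A R) (hL : Differentiable ℝ L)
    (hA : ∀ x, HasFDerivAt (gradient L) (A x) x) (θ : E) {δ : E} (hδ : ‖δ‖ ≤ R) :
    L (θ + δ) ≤ L θ + ⟪gradient L θ, δ⟫ + ⟪δ, A θ δ⟫ := by
  have := le_add_deriv_add_of_deriv2_le (hasDerivAt_comp_add_smul hL θ δ)
    (hasDerivAt_inner_gradient_comp_add_smul hA θ δ)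
    (fun s hs => (hstab _ θ (norm_add_smul_sub_le hδ hs) δ).2)
  simp only [one_smul, zero_smul, add_zero] at this
  linarith

theorem le_add (hstab : HessianStable A R) (hL : Differentiable ℝ L)
    (hA : ∀ x, HasFDerivAt (gradient L) (A x) x) (θ : E) {δ : E} (hδ : ‖δ‖ ≤ R) :
    L θ + ⟪gradient L θ, δ⟫ + ⟪δ, A θ δ⟫ / 4 ≤ L (θ + δ) := by
  have := le_add_deriv_add_of_deriv2_le (fun s => (hasDerivAt_comp_add_smul hL θ δ s).fun_neg)
    (fun s => (hasDerivAt_inner_gradient_comp_add_smul hA θ δ s).fun_neg)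
    (fun s hs => neg_le_neg (hstab _ θ (norm_add_smul_sub_le hδ hs) δ).1)
  simp only [one_smul, zero_smul, add_zero] at this
  linarith

theorem norm_sub_le_of_sub_lt (hstab : HessianStable A R) (hL : Differentiable ℝ L)
    (hA : ∀ x, HasFDerivAt (gradient L) (A x) x) (hR : 0 < R) (hconv : ConvexOn ℝ univ L)
    {θs : E} (hθs : gradient L θs = 0) {μ : ℝ} (hμ : 0 ≤ μ)
    (hμA : ∀ v, μ * ‖v‖ ^ 2 ≤ ⟪v, A θs v⟫) {θ : E} (hθ : L θ - L θs < μ * R ^ 2 / 4) :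
    ‖θ - θs‖ ≤ R := by
  -- Otherwise the point of `[θs, θ]` at distance `R` from `θs` already has gap `≥ μR²/4`.
  by_contra! hfar
  have hpos : 0 < ‖θ - θs‖ := hR.trans hfar
  set s := R / ‖θ - θs‖
  have hs0 : 0 < s := div_pos hR hpos
  have hs1 : s < 1 := (div_lt_one hpos).mpr hfar
  have hnorm : ‖s • (θ - θs)‖ = R := by
    rw [norm_smul, Real.norm_of_nonneg hs0.le]
    exact div_mul_cancel₀ R hpos.ne'
  have hlower := hstab.le_add hL hA θs hnorm.le
  rw [hθs, inner_zero_left, add_zero] at hlower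
  have hquad := hμA (s • (θ - θs))
  rw [hnorm] at hquad
  have hchord : L (θs + s • (θ - θs)) ≤ (1 - s) * L θs + s * L θ := by
    rw [show θs + s • (θ - θs) = (1 - s) • θs + s • θ by module]
    exact hconv.2 (mem_univ _) (mem_univ _) (by linarith) hs0.le (by ring)
  have hgain : μ * R ^ 2 / 4 ≤ s * (L θ - L θs) := by linarith
  have hgap0 : 0 ≤ L θ - L θs :=
    nonneg_of_mul_nonneg_right ((by positivity : (0 : ℝ) ≤ μ * R ^ 2 / 4).trans hgain) hs0
  linarith [mul_le_of_le_one_left hgap0 hs1.le]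

variable {θ θs n : E}

theorem sub_smul_le (hstab : HessianStable A R) (hL : Differentiable ℝ L)
    (hA : ∀ x, HasFDerivAt (gradient L) (A x) x) (hn : A θ n = gradient L θ) {t : ℝ}
    (ht : 0 ≤ t) (htn : t * ‖n‖ ≤ R) :
    L (θ - t • n) ≤ L θ - t * (1 - t) * ⟪gradient L θ, n⟫ := by
  have hδ : ‖-t • n‖ ≤ R := by rwa [norm_smul, norm_neg, Real.norm_of_nonneg ht]
  have := hstab.add_le hL hA θ hδ
  simp only [neg_smul, map_neg, map_smul, inner_neg_left, inner_neg_right, real_inner_smul_left,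
    real_inner_smul_right, hn, ← sub_eq_add_neg, real_inner_comm (gradient L θ) n] at this
  linarith

theorem sub_le_inner_gradient (hstab : HessianStable A R) (hL : Differentiable ℝ L)
    (hA : ∀ x, HasFDerivAt (gradient L) (A x) x) (hsymm : (A θ : E →ₗ[ℝ] E).IsSymmetric)
    (hn : A θ n = gradient L θ) (hθ : ‖θ - θs‖ ≤ R) :
    L θ - L θs ≤ ⟪gradient L θ, n⟫ := by
  have hlower := hstab.le_add hL hA θ (δ := θs - θ) (by rwa [norm_sub_rev])
  rw [add_sub_cancel] at hlower
  -- Completing the square: `0 ≤ Q (θs - θ + 2 n) = Q (θs - θ) + 4 ⟪∇L θ, θs - θ⟫ + 4 ν`.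
  have hsq := hstab.inner_apply_self_nonneg ((norm_nonneg _).trans hθ) θ (θs - θ + (2 : ℝ) • n)
  have hcross : ⟪n, A θ (θs - θ)⟫ = ⟪gradient L θ, θs - θ⟫ := by
    rw [← ContinuousLinearMap.coe_coe, ← hsymm, ContinuousLinearMap.coe_coe, hn]
  simp only [map_add, map_smul, inner_add_left, inner_add_right, real_inner_smul_left,
    real_inner_smul_right, hn, hcross] at hsq
  linarith [real_inner_comm n (gradient L θ), real_inner_comm (θs - θ) (gradient L θ)]

theorem mul_sq_norm_le_inner_gradient (hstab : HessianStable A R) {μ : ℝ}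
    (hμA : ∀ v, μ * ‖v‖ ^ 2 ≤ ⟪v, A θs v⟫) (hn : A θ n = gradient L θ) (hθ : ‖θ - θs‖ ≤ R) :
    μ / 2 * ‖n‖ ^ 2 ≤ ⟪gradient L θ, n⟫ := by
  rw [← hn, real_inner_comm]
  linarith [(hstab θ θs hθ n).1, hμA n]

theorem norm_le_of_sub_le (hstab : HessianStable A R) (hL : Differentiable ℝ L)
    (hA : ∀ x, HasFDerivAt (gradient L) (A x) x) (hn : A θ n = gradient L θ)
    (hmin : ∀ x, L θs ≤ L x) {μ lam : ℝ} (hμ : 0 < μ) (hν : μ / 2 * ‖n‖ ^ 2 ≤ ⟪gradient L θ, n⟫)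
    (hlam : 0 < lam) (hlamR : lam ≤ 2 * R) (hgap : L θ - L θs ≤ μ * lam ^ 2 / 8) :
    ‖n‖ ≤ lam := by
  by_contra! hlong
  have hpos : 0 < ‖n‖ := hlam.trans hlong
  -- A step of length `λ/2` would decrease `L` by more than the gap.
  set t := lam / (2 * ‖n‖) with ht
  have ht0 : 0 < t := by positivity
  have htn : t * ‖n‖ = lam / 2 := by rw [ht]; field_simp
  have ht2 : t ≤ 1 / 2 := by
    rw [div_le_iff₀ (by positivity)]; linarith
  have hdesc := hstab.sub_smul_le hL hA hn ht0.le (by linarith)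
  have hν0 : 0 ≤ ⟪gradient L θ, n⟫ := le_trans (by positivity) hν
  have hhalf : t / 2 * ⟪gradient L θ, n⟫ ≤ t * (1 - t) * ⟪gradient L θ, n⟫ :=
    mul_le_mul_of_nonneg_right (by nlinarith) hν0
  have hgain : μ * lam * ‖n‖ / 8 ≤ t / 2 * ⟪gradient L θ, n⟫ := by
    calc μ * lam * ‖n‖ / 8 = t / 2 * (μ / 2 * ‖n‖ ^ 2) := by
          rw [show lam = 2 * (t * ‖n‖) by rw [htn]; ring]; ring
      _ ≤ _ := by gcongr
  nlinarith [hmin (θ - t • n), mul_lt_mul_of_pos_left hlong (mul_pos hμ hlam)]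

theorem newton_step_sub_le (hstab : HessianStable A R) (hL : Differentiable ℝ L)
    (hA : ∀ x, HasFDerivAt (gradient L) (A x) x) (hconv : ConvexOn ℝ univ L)
    (hθs : gradient L θs = 0) (hmin : ∀ x, L θs ≤ L x) {μ : ℝ} (hμ : 0 < μ)
    (hμA : ∀ v, μ * ‖v‖ ^ 2 ≤ ⟪v, A θs v⟫) (hsymm : (A θ : E →ₗ[ℝ] E).IsSymmetric)
    (hn : A θ n = gradient L θ) {η lam : ℝ} (hη0 : 0 ≤ η) (hη1 : η ≤ 1) (hlam : 0 < lam)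
    (hlamR : lam ≤ R) (hgap : L θ - L θs ≤ μ * lam ^ 2 / 8) :
    ‖n‖ ≤ lam ∧ L (θ - η • n) - L θs ≤ (1 - η * (1 - η)) * (L θ - L θs) := by
  have hR : 0 < R := hlam.trans_le hlamR
  have hclose : ‖θ - θs‖ ≤ R :=
    hstab.norm_sub_le_of_sub_lt hL hA hR hconv hθs hμ.le hμA <| by
      nlinarith [mul_le_mul_of_nonneg_left (pow_le_pow_left₀ hlam.le hlamR 2) hμ.le,
        mul_pos hμ (pow_pos hR 2)]
  have hν := hstab.mul_sq_norm_le_inner_gradient hμA hn hclose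
  have hnorm := hstab.norm_le_of_sub_le hL hA hn hmin hμ hν hlam (by linarith) hgap
  refine ⟨hnorm, ?_⟩
  have hdesc := hstab.sub_smul_le hL hA hn hη0 (by nlinarith [norm_nonneg n])
  have hgapν := hstab.sub_le_inner_gradient hL hA hsymm hn hclose
  nlinarith [mul_le_mul_of_nonneg_left hgapν (mul_nonneg hη0 (sub_nonneg.2 hη1))]

end HessianStable

end

theorem clipR_of_abs_le {lam x : ℝ} (h : |x| ≤ lam) : clipR lam x = x := by
  rw [clipR, min_eq_left (abs_le.mp h).2, max_eq_left (abs_le.mp h).1]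

namespace Matrix

variable {ι : Type*} [Fintype ι] [DecidableEq ι]

theorem inv_eq_of_transpose_mul_mul_eq_diagonal {H V : Matrix ι ι ℝ} {σ : ι → ℝ}
    (hV : Vᵀ * V = 1) (hH : Vᵀ * H * V = diagonal σ) (hσ : ∀ j, σ j ≠ 0) :
    H⁻¹ = V * diagonal (fun j => (σ j)⁻¹) * Vᵀ := by
  have hV' : V * Vᵀ = 1 := mul_eq_one_comm.mp hV
  refine inv_eq_left_inv ?_
  calc V * diagonal (fun j => (σ j)⁻¹) * Vᵀ * H
      = V * diagonal (fun j => (σ j)⁻¹) * (Vᵀ * H * V) * Vᵀ := by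
        simp only [Matrix.mul_assoc, hV', Matrix.mul_one]
    _ = 1 := by
        rw [hH, Matrix.mul_assoc V, diagonal_mul_diagonal]
        simp [hσ, hV']

theorem norm_toLp_mulVec_of_transpose_mul_self {M : Matrix ι ι ℝ} (hM : Mᵀ * M = 1)
    (x : ι → ℝ) : ‖WithLp.toLp 2 (M *ᵥ x)‖ = ‖WithLp.toLp 2 x‖ := by
  have hsq : ‖WithLp.toLp 2 (M *ᵥ x)‖ ^ 2 = ‖WithLp.toLp 2 x‖ ^ 2 := by
    simp only [← real_inner_self_eq_norm_sq, EuclideanSpace.inner_toLp_toLp, star_trivial,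
      dotProduct_mulVec, vecMul_mulVec, hM, vecMul_one]
  exact (pow_left_inj₀ (norm_nonneg _) (norm_nonneg _) two_ne_zero).1 hsq

theorem toEuclideanLin_apply_toEuclideanLin_inv {H : Matrix ι ι ℝ} (hH : IsUnit H.det)
    (g : EuclideanSpace ℝ ι) : toEuclideanLin H (toEuclideanLin H⁻¹ g) = g := by
  simp [toLpLin_apply, mulVec_mulVec, mul_nonsing_inv _ hH]

theorem mulVec_clipR_eq_inv_mulVec {H V : Matrix ι ι ℝ} {σ : ι → ℝ}
    (hV : Vᵀ * V = 1) (hH : Vᵀ * H * V = diagonal σ) (hσ : ∀ j, σ j ≠ 0) {lam : ℝ}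
    {g : ι → ℝ} (hg : ‖WithLp.toLp 2 (H⁻¹ *ᵥ g)‖ ≤ lam) :
    V *ᵥ (fun j => clipR lam ((σ j)⁻¹ * (g ᵥ* V) j)) = H⁻¹ *ᵥ g := by
  have hcoord : ∀ j, (σ j)⁻¹ * (g ᵥ* V) j = (Vᵀ *ᵥ (H⁻¹ *ᵥ g)) j := by
    intro j
    rw [inv_eq_of_transpose_mul_mul_eq_diagonal hV hH hσ, mulVec_mulVec, ← Matrix.mul_assoc,
      ← Matrix.mul_assoc, hV, Matrix.one_mul, ← mulVec_mulVec, mulVec_diagonal, mulVec_transpose]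
  have hV' : V * Vᵀ = 1 := mul_eq_one_comm.mp hV
  have hsmall : ∀ j, |(Vᵀ *ᵥ (H⁻¹ *ᵥ g)) j| ≤ lam := fun j =>
    (PiLp.norm_apply_le (WithLp.toLp 2 (Vᵀ *ᵥ (H⁻¹ *ᵥ g))) j).trans <| by
      rwa [norm_toLp_mulVec_of_transpose_mul_self (by rwa [transpose_transpose])]
  simp only [hcoord, clipR_of_abs_le (hsmall _)]
  rw [mulVec_mulVec, hV', one_mulVec]

end Matrix

theorem le_of_le_div_sqrt_natCast {lam R : ℝ} {d : ℕ} (hlam : 0 < lam) (h : lam ≤ R / √d) :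
    lam ≤ R := by
  rcases Nat.eq_zero_or_pos d with rfl | hd
  · simp only [CharP.cast_eq_zero, Real.sqrt_zero, div_zero] at h
    linarith
  have hsqrt : 1 ≤ √(d : ℝ) := Real.one_le_sqrt.2 (by exact_mod_cast hd)
  have hR : 0 < R := (div_pos_iff_of_pos_right (by linarith)).1 (hlam.trans_le h)
  exact h.trans (div_le_self hR.le hsqrt)

theorem le_pow_sub_mul_of_contracting {a : ℕ → ℝ} {c q : ℝ} (hq0 : 0 ≤ q) (hq1 : q ≤ 1)
    (ha : ∀ t, 0 ≤ a t) (hstep : ∀ t, a t ≤ c → a (t + 1) ≤ q * a t) {T : ℕ} (hT : a T ≤ c) :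
    ∀ t, T ≤ t → a t ≤ c ∧ a t ≤ q ^ (t - T) * a T := by
  intro t ht
  obtain ⟨k, rfl⟩ := Nat.exists_eq_add_of_le ht
  rw [Nat.add_sub_cancel_left]
  induction k with
  | zero => simpa using hT
  | succ k ih =>
    obtain ⟨hc, hgeo⟩ := ih (Nat.le_add_right T k)
    have hnext : a (T + (k + 1)) ≤ q ^ (k + 1) * a T :=
      calc a (T + k + 1) ≤ q * a (T + k) := hstep _ hc
        _ ≤ q * (q ^ k * a T) := by gcongr
        _ = q ^ (k + 1) * a T := by ring
    exact ⟨hnext.trans ((mul_le_of_le_one_left (ha T) (pow_le_one₀ hq0 hq1)).trans hT), hnext⟩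

theorem stmt_16_general (d : ℕ)
    (L : EuclideanSpace ℝ (Fin d) → ℝ) (hL : ContDiff ℝ 2 L)
    (hconv : StrictConvexOn ℝ Set.univ L)
    (θs : EuclideanSpace ℝ (Fin d))
    (hmin : ∀ θ, θ ≠ θs → L θs < L θ)
    (hgrad0 : gradient L θs = 0)
    (H : EuclideanSpace ℝ (Fin d) → Matrix (Fin d) (Fin d) ℝ)
    (hH : ∀ x, HasFDerivAt (gradient L)
      (LinearMap.toContinuousLinearMap (Matrix.toEuclideanLin (H x))) x)
    (hpd : ∀ x, (H x).PosDef)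
    (μ : ℝ) (hμpos : 0 < μ)
    (hμlb : ∀ v : EuclideanSpace ℝ (Fin d), μ * ‖v‖ ^ 2 ≤ hessQF (H θs) v)
    (R : ℝ)
    (hA2 : ∀ θ θ' : EuclideanSpace ℝ (Fin d), ‖θ - θ'‖ ≤ R →
      ∀ v, (1/2) * hessQF (H θ') v ≤ hessQF (H θ) v ∧
        hessQF (H θ) v ≤ 2 * hessQF (H θ') v)
    (η : ℝ) (hη0 : 0 < η) (hη1 : η < 1)
    (lam : ℝ) (hlam0 : 0 < lam) (hlam : lam ≤ R / Real.sqrt d)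
    (θt : ℕ → EuclideanSpace ℝ (Fin d))
    (V : ℕ → Matrix (Fin d) (Fin d) ℝ)
    (σ : ℕ → Fin d → ℝ)
    (hVorth : ∀ t, (V t)ᵀ * V t = 1)
    (hσpos : ∀ t j, 0 < σ t j)
    (hdiag : ∀ t, (V t)ᵀ * H (θt t) * V t = Matrix.diagonal (σ t))
    (hiter : ∀ t, θt (t + 1) = θt t - η • (WithLp.equiv 2 (Fin d → ℝ)).symm
      ((V t).mulVec (fun j => clipR lam ((σ t j)⁻¹ *
        Matrix.vecMul ((WithLp.equiv 2 (Fin d → ℝ)) (gradient L (θt t))) (V t) j))))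
    (T : ℕ) (hT : L (θt T) - L θs ≤ μ * lam ^ 2 / 8) :
    ∀ t, T ≤ t →
      (θt (t + 1) = θt t -
        η • Matrix.toEuclideanLin ((H (θt t))⁻¹) (gradient L (θt t))) ∧
      L (θt t) - L θs ≤ (1 - η * (1 - η)) ^ (t - T) * (L (θt T) - L θs) := by
  have hstab : HessianStable (fun x => LinearMap.toContinuousLinearMap (toEuclideanLin (H x))) R :=
    hA2
  have hle : ∀ x, L θs ≤ L x := fun x => by
    rcases eq_or_ne x θs with rfl | hx
    exacts [le_rfl, (hmin x hx).le]
  have hstep : ∀ t, L (θt t) - L θs ≤ μ * lam ^ 2 / 8 →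
      θt (t + 1) = θt t - η • Matrix.toEuclideanLin ((H (θt t))⁻¹) (gradient L (θt t)) ∧
      L (θt (t + 1)) - L θs ≤ (1 - η * (1 - η)) * (L (θt t) - L θs) := by
    intro t ht
    have hnewton := Matrix.toEuclideanLin_apply_toEuclideanLin_inv
      ((Matrix.isUnit_iff_isUnit_det _).1 (hpd (θt t)).isUnit) (gradient L (θt t))
    obtain ⟨hnorm, hdesc⟩ := hstab.newton_step_sub_le (hL.differentiable two_ne_zero) hH
      hconv.convexOn hgrad0 hle hμpos hμlb
      (Matrix.isSymmetric_toEuclideanLin_iff.2 (hpd _).isHermitian) hnewton hη0.le hη1.le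
      hlam0 (le_of_le_div_sqrt_natCast hlam0 hlam) ht
    have hclip : θt (t + 1) = θt t -
        η • Matrix.toEuclideanLin ((H (θt t))⁻¹) (gradient L (θt t)) := by
      rw [hiter t, Matrix.mulVec_clipR_eq_inv_mulVec (g := WithLp.equiv 2 _ (gradient L (θt t)))
        (hVorth t) (hdiag t) (fun j => (hσpos t j).ne') hnorm]
      rfl
    exact ⟨hclip, hclip ▸ hdesc⟩
  intro t ht
  obtain ⟨hsmall, hdecay⟩ := le_pow_sub_mul_of_contracting (a := fun t => L (θt t) - L θs)
    (by nlinarith) (by nlinarith) (fun t => sub_nonneg.2 (hle _)) (fun t h => (hstep t h).2)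
    hT t ht
  exact ⟨(hstep t hsmall).1, hdecay⟩

/-- Lemma 11 (Convergence Lemma): once the loss gap is below μλ²/8, clipping no longer occurs and the loss gap decays geometrically. -/
theorem stmt_16 (d : ℕ) (hd : 1 ≤ d)
    (L : EuclideanSpace ℝ (Fin d) → ℝ) (hL : ContDiff ℝ 2 L)
    (hconv : StrictConvexOn ℝ Set.univ L)
    (θs : EuclideanSpace ℝ (Fin d))
    (hmin : ∀ θ, θ ≠ θs → L θs < L θ)
    (hgrad0 : gradient L θs = 0)
    (H : EuclideanSpace ℝ (Fin d) → Matrix (Fin d) (Fin d) ℝ)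
    (hH : ∀ x, HasFDerivAt (gradient L)
      (LinearMap.toContinuousLinearMap (Matrix.toEuclideanLin (H x))) x)
    (hpd : ∀ x, (H x).PosDef)
    (μ : ℝ) (hμpos : 0 < μ)
    (hμlb : ∀ v : EuclideanSpace ℝ (Fin d), μ * ‖v‖ ^ 2 ≤ hessQF (H θs) v)
    (hμeig : ∃ v : EuclideanSpace ℝ (Fin d), v ≠ 0 ∧
      Matrix.toEuclideanLin (H θs) v = μ • v)
    (R : ℝ) (hR : 0 < R)
    (hA2 : ∀ θ θ' : EuclideanSpace ℝ (Fin d), ‖θ - θ'‖ ≤ R →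
      ∀ v, (1/2) * hessQF (H θ') v ≤ hessQF (H θ) v ∧
        hessQF (H θ) v ≤ 2 * hessQF (H θ') v)
    (η : ℝ) (hη0 : 0 < η) (hη1 : η < 1)
    (lam : ℝ) (hlam0 : 0 < lam) (hlam : lam ≤ R / Real.sqrt d)
    (θt : ℕ → EuclideanSpace ℝ (Fin d))
    (V : ℕ → Matrix (Fin d) (Fin d) ℝ)
    (σ : ℕ → Fin d → ℝ)
    (hVorth : ∀ t, (V t)ᵀ * V t = 1)
    (hσpos : ∀ t j, 0 < σ t j)
    (hdiag : ∀ t, (V t)ᵀ * H (θt t) * V t = Matrix.diagonal (σ t))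
    (hiter : ∀ t, θt (t + 1) = θt t - η • (WithLp.equiv 2 (Fin d → ℝ)).symm
      ((V t).mulVec (fun j => clipR lam ((σ t j)⁻¹ *
        Matrix.vecMul ((WithLp.equiv 2 (Fin d → ℝ)) (gradient L (θt t))) (V t) j))))
    (T : ℕ) (hT : L (θt T) - L θs ≤ μ * lam ^ 2 / 8) :
    ∀ t, T ≤ t →
      (θt (t + 1) = θt t -
        η • Matrix.toEuclideanLin ((H (θt t))⁻¹) (gradient L (θt t))) ∧
      L (θt t) - L θs ≤ (1 - η * (1 - η)) ^ (t - T) * (L (θt T) - L θs) :=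
  stmt_16_general d L hL hconv θs hmin hgrad0 H hH hpd μ hμpos hμlb R hA2 η hη0 hη1 lam hlam0 hlam
    θt V σ hVorth hσpos hdiag hiter T hT
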